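/- arXiv:1503.06173 — 2 statements merged into one kernel-verified Lean document; each statement's English description precedes it below -/
import Mathlib

section
/- For every nonnegative integer n, J_{n+1}^0 = \sum_{s=0}^{n} \binom{n}{s} J_s^1, i.e. the Fubini number of n+1 equals the binomial transform of the one-bar barred preferential arrangement numbers. -/
/-
Removing the block that contains the last element of an `(n + 1)`-set leaves a set partition of
the `s` elements outside that block, which gives `S(n+1, k+1) = ∑ₛ C(n, s) S(s, k)`. Since
`J_s^1 = ∑ₖ S(s, k) k! (k + 1) = ∑ₖ S(s, k) (k + 1)!` and
`J_{n+1}^0 = ∑ₖ S(n+1, k+1) (k + 1)!`, substituting the recurrence and exchanging the two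
summations gives the theorem.
-/

open Finset

/-- Stirling numbers of the second kind. -/
def stirling2 : ℕ → ℕ → ℕ
  | 0, 0 => 1
  | 0, _ + 1 => 0
  | _ + 1, 0 => 0
  | n + 1, k + 1 => (k + 1) * stirling2 n (k + 1) + stirling2 n k

/-- Fubini numbers: number of preferential arrangements of an n-set. -/
def fubini (n : ℕ) : ℕ := ∑ s ∈ range (n + 1), stirling2 n s * s.factorial

/-- Number of barred preferential arrangements of an n-set with m bars. -/
def barred (n m : ℕ) : ℕ :=
  ∑ s ∈ range (n + 1), stirling2 n s * s.factorial * (m + s).choose m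

/-- Number of restricted barred preferential arrangements. -/
def restrictedBarred (n m : ℕ) : ℕ :=
  ∑ s ∈ range (n + 1), n.choose s * m ^ s * fubini (n - s)

theorem stirling2_eq_stirlingSecond : stirling2 = Nat.stirlingSecond := by
  funext n k
  induction n generalizing k with
  | zero => cases k <;> rfl
  | succ n ih =>
    rcases k with _ | k
    · rfl
    · simp only [stirling2, ih, Nat.stirlingSecond_succ_succ]

theorem Finset.sum_range_succ_choose_smul {M : Type*} [AddCommMonoid M] (n : ℕ) (f : ℕ → M) :
    ∑ s ∈ range (n + 2), (n + 1).choose s • f s =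
      ∑ s ∈ range (n + 1), n.choose s • f (s + 1) + ∑ s ∈ range (n + 1), n.choose s • f s := by
  rw [sum_range_succ' (fun s => (n + 1).choose s • f s)]
  simp only [Nat.choose_succ_succ, add_smul, sum_add_distrib]
  rw [sum_range_succ (fun s => n.choose (s + 1) • f (s + 1)), Nat.choose_succ_self, zero_smul,
    add_zero, sum_range_succ' (fun s => n.choose s • f s) n, add_assoc, Nat.choose_zero_right,
    Nat.choose_zero_right]

namespace Nat

theorem sum_range_choose_mul_stirlingSecond (n k : ℕ) :
    ∑ s ∈ range (n + 1), n.choose s * stirlingSecond s k = stirlingSecond (n + 1) (k + 1) := by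
  induction n generalizing k with
  | zero => cases k <;> simp [stirlingSecond_succ_succ]
  | succ n ih =>
    have pascal := sum_range_succ_choose_smul n (stirlingSecond · k)
    simp only [smul_eq_mul] at pascal
    rw [pascal, ih]
    rcases k with _ | k
    · simp [stirlingSecond_succ_succ]
    · simp only [stirlingSecond_succ_succ _ k, mul_add, sum_add_distrib, mul_left_comm _ (k + 1),
        ← mul_sum]
      rw [ih, ih, stirlingSecond_succ_succ (n + 1) (k + 1)]
      ring

theorem sum_range_stirlingSecond_smul_of_le {M : Type*} [AddCommMonoid M]
    {n m : ℕ} (h : n ≤ m) (f : ℕ → M) :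
    ∑ k ∈ range (n + 1), stirlingSecond n k • f k =
      ∑ k ∈ range (m + 1), stirlingSecond n k • f k := by
  refine sum_subset (range_subset_range.2 (by omega)) fun k _ hk => ?_
  rw [stirlingSecond_eq_zero_of_lt (by simpa using hk), zero_smul]

end Nat

open Nat

theorem barred_one (n : ℕ) :
    barred n 1 = ∑ k ∈ range (n + 1), stirlingSecond n k * (k + 1)! := by
  refine sum_congr rfl fun k _ => ?_
  rw [stirling2_eq_stirlingSecond, choose_one_right, factorial_succ, add_comm 1 k, mul_assoc,
    mul_comm k !]

theorem barred_zero_succ (n : ℕ) :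
    barred (n + 1) 0 = ∑ k ∈ range (n + 1), stirlingSecond (n + 1) (k + 1) * (k + 1)! := by
  simp only [barred, stirling2_eq_stirlingSecond, zero_add, choose_zero_right, mul_one]
  rw [sum_range_succ', stirlingSecond_succ_zero, zero_mul, add_zero]

theorem fubini_succ_eq_binomial_transform (n : ℕ) :
    barred (n + 1) 0 = ∑ s ∈ range (n + 1), n.choose s * barred s 1 :=
  calc barred (n + 1) 0
      = ∑ k ∈ range (n + 1), ∑ s ∈ range (n + 1),
          n.choose s * stirlingSecond s k * (k + 1)! := by
        rw [barred_zero_succ]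
        refine sum_congr rfl fun k _ => ?_
        rw [← sum_range_choose_mul_stirlingSecond, sum_mul]
    _ = ∑ s ∈ range (n + 1), n.choose s * ∑ k ∈ range (n + 1), stirlingSecond s k * (k + 1)! := by
        rw [sum_comm]
        simp_rw [mul_sum, mul_assoc]
    _ = ∑ s ∈ range (n + 1), n.choose s * barred s 1 := by
        refine sum_congr rfl fun s hs => ?_
        have extend := sum_range_stirlingSecond_smul_of_le (Nat.lt_succ_iff.1 (mem_range.1 hs))
          fun k => (k + 1)!
        simp only [smul_eq_mul] at extend
        rw [barred_one, extend]
end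

section
/- For all nonnegative integers m and n, J_{n+1}^m = (m+1) \sum_{s=0}^{n} \binom{n}{s} J_s^{m+1}. -/
open Finset

/-!
Splitting off the block containing the element `n + 1` gives
`S(n+1, k+1) = ∑ⱼ C(n, j) S(j, k)`, where `j` counts the elements outside that block. Together
with `(k+1)! C(m+k+1, m) = (m+1) k! C(m+k+1, m+1)` this turns each term of `J_{n+1}^m` into
`m + 1` times a sum of terms of the `J_j^{m+1}`, and exchanging the two sums gives the identity.
-/

open Nat

theorem stirling2_eq_stirlingSecond_s5 : ∀ n k, stirling2 n k = stirlingSecond n k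
  | 0, 0 | 0, _ + 1 | _ + 1, 0 => rfl
  | n + 1, k + 1 => by
    rw [stirling2, stirlingSecond_succ_succ, stirling2_eq_stirlingSecond_s5 n (k + 1),
      stirling2_eq_stirlingSecond_s5 n k]

theorem stirlingSecond_succ_succ_eq_sum_choose_mul (n k : ℕ) :
    stirlingSecond (n + 1) (k + 1) = ∑ j ∈ range (n + 1), n.choose j * stirlingSecond j k := by
  induction n generalizing k with
  | zero => simp [stirlingSecond_succ_succ]
  | succ n ih =>
    have pascal := sum_choose_succ_mul (R := ℕ) (fun j _ => stirlingSecond j k) n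
    simp only [Nat.cast_id] at pascal
    rw [pascal, ← ih, stirlingSecond_succ_succ]
    cases k with
    | zero => simp
    | succ k =>
      simp only [stirlingSecond_succ_succ, mul_add, sum_add_distrib, mul_left_comm _ (k + 1),
        ← mul_sum, ← ih]
      ring

theorem succ_mul_choose_eq_succ_mul_choose_succ (m k : ℕ) :
    (k + 1) * (m + k + 1).choose m = (m + 1) * (m + k + 1).choose (m + 1) := by
  rw [mul_comm, mul_comm (m + 1), choose_succ_right_eq, show m + k + 1 - m = k + 1 by omega]

theorem factorial_succ_mul_choose_eq (m k : ℕ) :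
    (k + 1)! * (m + (k + 1)).choose m = (m + 1) * (k ! * (m + 1 + k).choose (m + 1)) := by
  rw [factorial_succ, ← add_assoc, add_right_comm m 1 k, mul_assoc, mul_left_comm,
    succ_mul_choose_eq_succ_mul_choose_succ, mul_left_comm]

theorem barred_eq_sum_range {n N : ℕ} (m : ℕ) (h : n < N) :
    barred n m = ∑ s ∈ range N, stirlingSecond n s * s ! * (m + s).choose m := by
  simp only [barred, stirling2_eq_stirlingSecond_s5]
  refine sum_subset (range_subset_range.2 h) fun s _ hs => ?_
  rw [stirlingSecond_eq_zero_of_lt (by simpa using hs), zero_mul, zero_mul]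

theorem barred_succ (m n : ℕ) :
    barred (n + 1) m = (m + 1) * ∑ s ∈ range (n + 1), n.choose s * barred s (m + 1) := by
  calc barred (n + 1) m
      = ∑ k ∈ range (n + 1),
          stirlingSecond (n + 1) (k + 1) * (k + 1)! * (m + (k + 1)).choose m := by
        simp [barred, stirling2_eq_stirlingSecond_s5, sum_range_succ' _ (n + 1)]
    _ = ∑ k ∈ range (n + 1), ∑ j ∈ range (n + 1),
          (m + 1) * (n.choose j * (stirlingSecond j k * k ! * (m + 1 + k).choose (m + 1))) := by
        refine sum_congr rfl fun k _ => ?_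
        rw [stirlingSecond_succ_succ_eq_sum_choose_mul, sum_mul, sum_mul]
        refine sum_congr rfl fun j _ => ?_
        rw [mul_assoc (_ * _), factorial_succ_mul_choose_eq]
        ring
    _ = (m + 1) * ∑ j ∈ range (n + 1), n.choose j * barred j (m + 1) := by
        rw [sum_comm, mul_sum]
        refine sum_congr rfl fun j hj => ?_
        rw [← mul_sum, ← mul_sum, barred_eq_sum_range (m + 1) (mem_range.1 hj)]
end
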